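/- arXiv:2601.22908 — 2 statements merged into one kernel-verified Lean document; each statement's English description precedes it below -/
import Mathlib

section
/- (Algebraic core of Theorem 5.9, reducibility_atomic.) Let A and B be abelian groups such that every additive endomorphism of A that factors through B is nilpotent. Then for every bijective additive endomorphism f of A × B, both block components f_AA and f_BB are automorphisms of A and B respectively. -/
/-- The block components of an additive endomorphism of `A × B`. -/
def blockAA {A B : Type*} [AddCommGroup A] [AddCommGroup B] (f : A × B →+ A × B) : A →+ A :=
  (AddMonoidHom.fst A B).comp (f.comp (AddMonoidHom.inl A B))

def blockBB {A B : Type*} [AddCommGroup A] [AddCommGroup B] (f : A × B →+ A × B) : B →+ B :=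
  (AddMonoidHom.snd A B).comp (f.comp (AddMonoidHom.inr A B))

/-- View an additive endomorphism as an element of the endomorphism monoid, so that
powers make sense. -/
def toEnd {A : Type*} [AddCommGroup A] (e : A →+ A) : AddMonoid.End A := e

/-- An additive endomorphism is nilpotent if `e^k = 0` for some `k ≥ 1`. -/
def IsNilpotentEnd {A : Type*} [AddCommGroup A] (e : A →+ A) : Prop :=
  ∃ k : ℕ, 1 ≤ k ∧ toEnd e ^ k = 0

/-!
Let `g = f⁻¹`. Comparing the `(A, A)` blocks of `g ∘ f = 1` and `f ∘ g = 1` gives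
`g_AA f_AA = 1 - g_AB f_BA` and `f_AA g_AA = 1 - f_AB g_BA`. The subtracted terms factor through
`B`, hence are nilpotent, so both products are invertible and `f_AA` is bijective. Since `v u`
nilpotent forces `u v` nilpotent, endomorphisms of `B` factoring through `A` are nilpotent as
well, and the `B`-block follows by conjugating `f` with the swap `A × B ≃+ B × A`.
-/

section Blocks

variable {A B : Type*} [AddCommGroup A] [AddCommGroup B]

def blockAB (f : A × B →+ A × B) : B →+ A :=
  (AddMonoidHom.fst A B).comp (f.comp (AddMonoidHom.inr A B))

def blockBA (f : A × B →+ A × B) : A →+ B :=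
  (AddMonoidHom.snd A B).comp (f.comp (AddMonoidHom.inl A B))

theorem blockAA_comp (f g : A × B →+ A × B) :
    blockAA (f.comp g) = (blockAA f).comp (blockAA g) + (blockAB f).comp (blockBA g) := by
  ext a
  simp only [blockAA, blockAB, blockBA, AddMonoidHom.comp_apply, AddMonoidHom.add_apply,
    AddMonoidHom.coe_fst, AddMonoidHom.coe_snd, AddMonoidHom.inl_apply, AddMonoidHom.inr_apply]
  generalize g (a, 0) = x
  rw [← Prod.fst_add, ← map_add, Prod.mk_add_mk, add_zero, zero_add]

theorem blockAA_id : blockAA (AddMonoidHom.id (A × B)) = AddMonoidHom.id A := rfl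

theorem blockAA_conj_prodComm (f : A × B →+ A × B) :
    blockAA ((AddEquiv.prodComm : A × B ≃+ B × A).toAddMonoidHom.comp
      (f.comp (AddEquiv.prodComm : B × A ≃+ A × B).toAddMonoidHom)) = blockBB f := rfl

end Blocks

section Nilpotent

variable {A B : Type*} [AddCommGroup A] [AddCommGroup B]

theorem AddMonoid.End.bijective_of_isUnit {x : AddMonoid.End A} (hx : IsUnit x) :
    Function.Bijective x := by
  obtain ⟨u, rfl⟩ := hx
  exact Function.bijective_iff_has_inverse.mpr
    ⟨(u⁻¹ : (AddMonoid.End A)ˣ), fun a => DFunLike.congr_fun u.inv_mul a,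
      fun a => DFunLike.congr_fun u.mul_inv a⟩

theorem toEnd_comp_pow_succ (u : A →+ B) (v : B →+ A) (n : ℕ) :
    toEnd (u.comp v) ^ (n + 1) = u.comp ((toEnd (v.comp u) ^ n).comp v) := by
  induction n with
  | zero => rfl
  | succ n ih => rw [pow_succ, ih, pow_succ]; rfl

theorem isNilpotent_comp_comm (u : A →+ B) (v : B →+ A)
    (h : IsNilpotent (toEnd (v.comp u))) : IsNilpotent (toEnd (u.comp v)) := by
  obtain ⟨n, hn⟩ := h
  refine ⟨n + 1, ?_⟩
  rw [toEnd_comp_pow_succ, hn]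
  ext x
  exact map_zero u

theorem isUnit_toEnd_comp_of_add_eq_id {p q : A →+ A} {u : A →+ B} {v : B →+ A}
    (hvu : IsNilpotent (toEnd (v.comp u))) (h : p.comp q + v.comp u = AddMonoidHom.id A) :
    IsUnit (toEnd (p.comp q)) := by
  have hpq : toEnd (p.comp q) = 1 - toEnd (v.comp u) := eq_sub_of_add_eq h
  rw [hpq]
  exact hvu.isUnit_one_sub

theorem bijective_blockAA_of_isNilpotent
    (hnil : ∀ (u : A →+ B) (v : B →+ A), IsNilpotent (toEnd (v.comp u)))
    {f : A × B →+ A × B} (hf : Function.Bijective f) : Function.Bijective (blockAA f) := by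
  let e := AddEquiv.ofBijective f hf
  let g : A × B →+ A × B := e.symm.toAddMonoidHom
  have hgf : g.comp f = AddMonoidHom.id _ := AddMonoidHom.ext e.symm_apply_apply
  have hfg : f.comp g = AddMonoidHom.id _ := AddMonoidHom.ext e.apply_symm_apply
  have hleft : IsUnit (toEnd ((blockAA g).comp (blockAA f))) :=
    isUnit_toEnd_comp_of_add_eq_id (hnil _ _) (by rw [← blockAA_comp, hgf, blockAA_id])
  have hright : IsUnit (toEnd ((blockAA f).comp (blockAA g))) :=
    isUnit_toEnd_comp_of_add_eq_id (hnil _ _) (by rw [← blockAA_comp, hfg, blockAA_id])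
  exact ⟨(AddMonoid.End.bijective_of_isUnit hleft).1.of_comp (f := blockAA g),
    (AddMonoid.End.bijective_of_isUnit hright).2.of_comp (g := blockAA g)⟩

theorem bijective_blockBB_of_isNilpotent
    (hnil : ∀ (u : B →+ A) (v : A →+ B), IsNilpotent (toEnd (v.comp u)))
    {f : A × B →+ A × B} (hf : Function.Bijective f) : Function.Bijective (blockBB f) := by
  rw [← blockAA_conj_prodComm]
  exact bijective_blockAA_of_isNilpotent hnil
    (AddEquiv.prodComm.bijective.comp (hf.comp AddEquiv.prodComm.bijective))

end Nilpotent

/-- Algebraic core of Theorem 5.9 (`reducibility_atomic`): if every additive endomorphism of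
`A` factoring through `B` is nilpotent, then for every bijective additive endomorphism `f` of
`A × B`, both diagonal block components `f_AA` and `f_BB` are automorphisms. -/
theorem blocks_bijective_of_nilpotent_factorizations {A B : Type*}
    [AddCommGroup A] [AddCommGroup B]
    (hnil : ∀ e : A →+ A, (∃ (u : A →+ B) (v : B →+ A), e = v.comp u) → IsNilpotentEnd e)
    (f : A × B →+ A × B) (hf : Function.Bijective f) :
    Function.Bijective (blockAA f) ∧ Function.Bijective (blockBB f) := by
  have hA : ∀ (u : A →+ B) (v : B →+ A), IsNilpotent (toEnd (v.comp u)) := by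
    intro u v
    obtain ⟨k, -, hk⟩ := hnil _ ⟨u, v, rfl⟩
    exact ⟨k, hk⟩
  exact ⟨bijective_blockAA_of_isNilpotent hA hf,
    bijective_blockBB_of_isNilpotent (fun v u => isNilpotent_comp_comm u v (hA u v)) hf⟩
end

section
/- (Algebraic core of Corollary 3.5, cor:k-reducibility.) Let A be an abelian group, let p_1, …, p_m be distinct primes and r_1, …, r_m positive integers, and set B = ⊕_{j=1}^m ℤ/p_j^{r_j}ℤ. Assume every additive endomorphism of B that factors through A is nilpotent. If f is a bijective additive endomorphism of A × B whose block component f_AA is an automorphism of A, then the block component f_BB is an automorphism of B. -/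
/-- In a monoid, if `a * b` and `b * a` are both units then `a` is a unit. -/
lemma isUnit_of_mul_isUnit' {M : Type*} [Monoid M] {a b : M}
    (h1 : IsUnit (a * b)) (h2 : IsUnit (b * a)) : IsUnit a := by
  obtain ⟨u, hu⟩ := h1
  obtain ⟨v, hv⟩ := h2
  have hr : a * (b * ↑u⁻¹) = 1 := by
    rw [← mul_assoc, ← hu, Units.mul_inv]
  have hl : (↑v⁻¹ * b) * a = 1 := by
    rw [mul_assoc, ← hv, Units.inv_mul]
  have hlr : (↑v⁻¹ * b : M) = b * ↑u⁻¹ := by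
    calc (↑v⁻¹ * b : M) = (↑v⁻¹ * b) * (a * (b * ↑u⁻¹)) := by rw [hr, mul_one]
    _ = ((↑v⁻¹ * b) * a) * (b * ↑u⁻¹) := by rw [← mul_assoc, mul_assoc _ b a, ← mul_assoc]
    _ = b * ↑u⁻¹ := by rw [hl, one_mul]
  exact ⟨⟨a, b * ↑u⁻¹, hr, by rw [← hlr]; exact hl⟩, rfl⟩

/-- If `h ∘ k = id` on `A × B`, then `h_BA ∘ k_AB + h_BB ∘ k_BB = id` on `B`. -/
lemma blocks_comp {A B : Type*} [AddCommGroup A] [AddCommGroup B]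
    (h k : A × B →+ A × B) (hhk : ∀ x, h (k x) = x) (b : B) :
    ((AddMonoidHom.snd A B).comp (h.comp (AddMonoidHom.inl A B)))
      (((AddMonoidHom.fst A B).comp (k.comp (AddMonoidHom.inr A B))) b)
      + blockBB h (blockBB k b) = b := by
  have h1 : h (k (0, b)) = (0, b) := hhk _
  have h2 : k (0, b) = (((k (0, b)).1, (0 : B)) + ((0 : A), (k (0, b)).2)) := by
    simp
  have h3 : h ((k (0, b)).1, (0 : B)) + h ((0 : A), (k (0, b)).2) = (0, b) := by
    rw [← map_add, ← h2, h1]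
  have h4 := congrArg Prod.snd h3
  simpa [blockBB] using h4

/-- Algebraic core of Corollary 3.5 (`cor:k-reducibility`): let `B = ⊕_j ℤ/p_j^{r_j}ℤ` for
distinct primes `p_j` and `r_j ≥ 1`, and suppose every additive endomorphism of `B` factoring
through `A` is nilpotent.  If `f` is a bijective additive endomorphism of `A × B` whose block
`f_AA` is an automorphism of `A`, then `f_BB` is an automorphism of `B`. -/
theorem blockBB_bijective_of_nilpotent_primary {A : Type*} [AddCommGroup A]
    {m : ℕ} (hm : 1 ≤ m)
    (p : Fin m → ℕ) (hp : ∀ j, (p j).Prime) (hinj : Function.Injective p)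
    (r : Fin m → ℕ) (hr : ∀ j, 1 ≤ r j)
    (hnil : ∀ e : (∀ j, ZMod (p j ^ r j)) →+ ∀ j, ZMod (p j ^ r j),
      (∃ (u : (∀ j, ZMod (p j ^ r j)) →+ A) (v : A →+ ∀ j, ZMod (p j ^ r j)),
        e = v.comp u) → IsNilpotentEnd e)
    (f : A × (∀ j, ZMod (p j ^ r j)) →+ A × ∀ j, ZMod (p j ^ r j))
    (hf : Function.Bijective f)
    (hAA : Function.Bijective (blockAA f)) :
    Function.Bijective (blockBB f) := by
  set B := ∀ j, ZMod (p j ^ r j) with hB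
  let F := AddEquiv.ofBijective f hf
  let g : A × B →+ A × B := F.symm.toAddMonoidHom
  let fAB : B →+ A := (AddMonoidHom.fst A B).comp (f.comp (AddMonoidHom.inr A B))
  let fBA : A →+ B := (AddMonoidHom.snd A B).comp (f.comp (AddMonoidHom.inl A B))
  let gAB : B →+ A := (AddMonoidHom.fst A B).comp (g.comp (AddMonoidHom.inr A B))
  let gBA : A →+ B := (AddMonoidHom.snd A B).comp (g.comp (AddMonoidHom.inl A B))
  have hfg : ∀ x, f (g x) = x := fun x => F.apply_symm_apply x
  have hgf : ∀ x, g (f x) = x := fun x => F.symm_apply_apply x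
  have I1 := blocks_comp f g hfg
  have I2 := blocks_comp g f hgf
  have E1 : toEnd (fBA.comp gAB) + toEnd (blockBB f) * toEnd (blockBB g) = 1 := by
    exact AddMonoidHom.ext fun b => I1 b
  have E2 : toEnd (gBA.comp fAB) + toEnd (blockBB g) * toEnd (blockBB f) = 1 := by
    exact AddMonoidHom.ext fun b => I2 b
  obtain ⟨k1, -, hn1⟩ := hnil (fBA.comp gAB) ⟨gAB, fBA, rfl⟩
  obtain ⟨k2, -, hn2⟩ := hnil (gBA.comp fAB) ⟨fAB, gBA, rfl⟩
  have N1 : IsNilpotent (toEnd (fBA.comp gAB)) := ⟨k1, hn1⟩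
  have N2 : IsNilpotent (toEnd (gBA.comp fAB)) := ⟨k2, hn2⟩
  have U1 : IsUnit (toEnd (blockBB f) * toEnd (blockBB g)) := by
    have hu := N1.isUnit_one_sub
    have heq : (1 : AddMonoid.End B) - toEnd (fBA.comp gAB)
        = toEnd (blockBB f) * toEnd (blockBB g) := by
      rw [← E1]; abel
    rwa [heq] at hu
  have U2 : IsUnit (toEnd (blockBB g) * toEnd (blockBB f)) := by
    have hu := N2.isUnit_one_sub
    have heq : (1 : AddMonoid.End B) - toEnd (gBA.comp fAB)
        = toEnd (blockBB g) * toEnd (blockBB f) := by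
      rw [← E2]; abel
    rwa [heq] at hu
  obtain ⟨u, hu'⟩ := isUnit_of_mul_isUnit' U1 U2
  have h1 : (↑u⁻¹ * toEnd (blockBB f) : AddMonoid.End B) = 1 := by rw [← hu', u.inv_mul]
  have h2 : (toEnd (blockBB f) * ↑u⁻¹ : AddMonoid.End B) = 1 := by rw [← hu', u.mul_inv]
  exact Function.bijective_iff_has_inverse.mpr
    ⟨(↑u⁻¹ : AddMonoid.End B), fun b => DFunLike.congr_fun h1 b,
      fun b => DFunLike.congr_fun h2 b⟩
end
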